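/- arXiv:1203.6432 — 2 statements merged into one kernel-verified Lean document; each statement's English description precedes it below -/
import Mathlib

section
/- (i) Every equilibrium state Λ ∈ E(M) satisfies Λ(G) = 1. (ii) If p_e|_{K_{i(e)}} is uniformly continuous for all e ∈ E, then Λ(G) = 0 for every Λ ∈ E_⊥(M). -/
open MeasureTheory Filter Topology
open scoped ENNReal NNReal Classical

noncomputable section

/-- A countable Markov system `(K_{i(e)}, w_e, p_e)_{e ∈ E}` on a metric space `K`:
a partition `(K_j)_{j ∈ N}` of `K` into nonempty Borel sets, source and target maps
`i, t : E → N` (`i` surjective), and for each `e ∈ E` Borel maps `w_e` and probability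
functions `p_e` (extended by zero outside `K_{i(e)}`) with
`∑_{e, i(e)=j} p_e(y) = 1` for `y ∈ K_j`. -/
structure MarkovSystem (K : Type*) [MetricSpace K] [MeasurableSpace K]
    (N : Type*) (E : Type*) where
  Kset : N → Set K
  Kset_nonempty : ∀ j, (Kset j).Nonempty
  Kset_measurable : ∀ j, MeasurableSet (Kset j)
  Kset_disjoint : Pairwise (Function.onFun Disjoint Kset)
  Kset_cover : (⋃ j, Kset j) = Set.univ
  i : E → N
  t : E → N
  i_surj : Function.Surjective i
  w : E → K → K
  p : E → K → ℝ
  w_measurable : ∀ e, Measurable (w e)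
  p_measurable : ∀ e, Measurable (p e)
  p_nonneg : ∀ e x, 0 ≤ p e x
  p_le_one : ∀ e x, p e x ≤ 1
  p_zero_outside : ∀ e x, x ∉ Kset (i e) → p e x = 0
  w_mapsTo : ∀ e, Set.MapsTo (w e) (Kset (i e)) (Kset (t e))
  p_pos_somewhere : ∀ e, ∃ x ∈ Kset (i e), 0 < p e x
  p_tsum_one : ∀ j, ∀ x ∈ Kset j, (∑' e : {e : E // i e = j}, p e.val x) = 1

/-- `Ē = E ∪ {∞}` (one-point compactification); with `E` countable its Borel σ-algebra
consists of all subsets. -/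
instance optionMeasurableSpace (E : Type*) : MeasurableSpace (Option E) := ⊤

/-- The code space `Σ̄ = Ē^ℤ`, carrying the product σ-algebra. -/
abbrev CodeSpace (E : Type*) : Type _ := ℤ → Option E

/-- The left shift `S` on the code space, `(Sσ)_{k-1} = σ_k`. -/
def shiftMap (E : Type*) : CodeSpace E → CodeSpace E := fun σ k => σ (k + 1)

/-- The cylinder set `_m[es₀, …, es_{n}] = {σ : σ_{m+k} = es_k}`. -/
def cylSetL {E : Type*} (m : ℤ) (es : List (Option E)) : Set (CodeSpace E) :=
  {σ | ∀ (k : ℕ) (h : k < es.length), σ (m + (k : ℤ)) = es.get ⟨k, h⟩}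

/-- The σ-algebra `𝓕` generated by the cylinder sets `_m[e_m, …, e_0]`, `m ≤ 0`. -/
def pastAlgebra (E : Type*) : MeasurableSpace (CodeSpace E) :=
  MeasurableSpace.generateFrom
    {A | ∃ es : List (Option E), es ≠ [] ∧ A = cylSetL (1 - (es.length : ℤ)) es}

/-- The conditional entropy `h_S(Λ) = H_Λ((_1[e])_{e ∈ Ē} | 𝓕)`. -/
def entropyS {E : Type*} (Λ : Measure (CodeSpace E)) : ℝ≥0∞ :=
  ∑' eo : Option E,
    ∫⁻ σ, ENNReal.ofReal
        (Real.negMulLog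
          ((Λ[Set.indicator {τ : CodeSpace E | τ 1 = eo} (fun _ => (1 : ℝ)) | pastAlgebra E]) σ)) ∂Λ

namespace MarkovSystem

variable {K : Type*} [MetricSpace K] [MeasurableSpace K] {N E : Type*}

/-- The Markov operator `Uf = ∑_e p_e · (f ∘ w_e)` acting on nonnegative Borel functions. -/
def markovOp (M : MarkovSystem K N E) (f : K → ℝ≥0∞) : K → ℝ≥0∞ :=
  fun x => ∑' e : E, ENNReal.ofReal (M.p e x) * f (M.w e x)

/-- The adjoint operator `U*` acting on measures, `(U*ν)(B) = ∫ U(1_B) dν`. -/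
def adjOp (M : MarkovSystem K N E) (ν : Measure K) : Measure K :=
  Measure.sum fun e : E =>
    Measure.map (M.w e) (ν.withDensity fun x => ENNReal.ofReal (M.p e x))

/-- `μ ∈ P(M)`: `μ` is an invariant Borel probability measure, `U*μ = μ`. -/
def IsInvariantMeasure (M : MarkovSystem K N E) (μ : Measure K) : Prop :=
  IsProbabilityMeasure μ ∧ M.adjOp μ = μ

/-- The path space `Σ_G`: all coordinates lie in `E` and `i(σ_{n+1}) = t(σ_n)`. -/
def pathSpace (M : MarkovSystem K N E) : Set (CodeSpace E) :=
  {σ | ∀ n : ℤ, ∃ e e' : E, σ n = some e ∧ σ (n + 1) = some e' ∧ M.i e' = M.t e}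

/-- `T_j = {σ ∈ Σ_G : t(σ_0) = j}`. -/
def Tset (M : MarkovSystem K N E) (j : N) : Set (CodeSpace E) :=
  {σ | σ ∈ M.pathSpace ∧ ∃ e : E, σ 0 = some e ∧ M.t e = j}

/-- `w` extended to `Ē`, with `w_∞ = id`. -/
def wext (M : MarkovSystem K N E) : Option E → K → K := fun o => o.elim id M.w

/-- `p` extended to `Ē`, with `p_∞ = 0`. -/
def pext (M : MarkovSystem K N E) : Option E → K → ℝ := fun o => o.elim (fun _ => 0) M.p

/-- `i` extended to `Ē`, with `i(∞) = j₀`. -/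
def iext (M : MarkovSystem K N E) (j0 : N) : Option E → N := fun o => o.elim j0 M.i

/-- `t` extended to `Ē`, with `t(∞) = j₀`. -/
def text (M : MarkovSystem K N E) (j0 : N) : Option E → N := fun o => o.elim j0 M.t

/-- `iterW M σ n y = w_{σ_0} ∘ w_{σ_{-1}} ∘ ⋯ ∘ w_{σ_{-n}} (y)`. -/
def iterW (M : MarkovSystem K N E) (σ : CodeSpace E) : ℕ → K → K
  | 0, y => M.wext (σ 0) y
  | n + 1, y => M.iterW σ n (M.wext (σ (-(n + 1 : ℤ))) y)

/-- `orbit M j0 xp σ n = w_{σ_0} ∘ ⋯ ∘ w_{σ_{-n}} (x_{i(σ_{-n})})`. -/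
def orbit (M : MarkovSystem K N E) (j0 : N) (xp : N → K) (σ : CodeSpace E) (n : ℕ) : K :=
  M.iterW σ n (xp (M.iext j0 (σ (-(n : ℤ)))))

/-- `D`: the set of `σ ∈ Σ_G` for which `lim_{m → -∞} w_{σ_0} ∘ ⋯ ∘ w_{σ_m}(x_{i(σ_m)})` exists. -/
def codeDomain (M : MarkovSystem K N E) (j0 : N) (xp : N → K) : Set (CodeSpace E) :=
  {σ | σ ∈ M.pathSpace ∧ ∃ l : K, Tendsto (fun n : ℕ => M.orbit j0 xp σ n) atTop (𝓝 l)}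

/-- The coding map `F`: the above limit on `D`, and `x_{t(σ_0)}` elsewhere. -/
def code (M : MarkovSystem K N E) (j0 : N) (xp : N → K) (σ : CodeSpace E) : K :=
  if h : σ ∈ M.codeDomain j0 xp then h.2.choose else xp (M.text j0 (σ 0))

/-- `Λ ∈ E(M)`: `Λ` is a shift-invariant Borel probability measure with `Λ(D) = 1` and
`E_Λ(1_{_1[e]} | 𝓕) = p_e ∘ F` `Λ`-a.e. for every `e ∈ E` (an equilibrium state). -/
def IsEquilibrium (M : MarkovSystem K N E) (j0 : N) (xp : N → K)
    (Λ : Measure (CodeSpace E)) : Prop :=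
  IsProbabilityMeasure Λ ∧ Measure.map (shiftMap E) Λ = Λ ∧
    Λ (M.codeDomain j0 xp) = 1 ∧
    ∀ e : E,
      (Λ[Set.indicator {σ : CodeSpace E | σ 1 = some e} (fun _ => (1 : ℝ)) | pastAlgebra E])
        =ᵐ[Λ] fun σ => M.p e (M.code j0 xp σ)

/-- `pbar` is the family of continuous extensions `p̄_e` of `p_e|_{K_{i(e)}}` to the closure
of `K_{i(e)}`, extended further by zero on `K`. -/
def IsUCExtensionP (M : MarkovSystem K N E) (pbar : E → K → ℝ) : Prop :=
  ∀ e : E, ContinuousOn (pbar e) (closure (M.Kset (M.i e))) ∧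
    (∀ x ∈ M.Kset (M.i e), pbar e x = M.p e x) ∧
    (∀ x, x ∉ closure (M.Kset (M.i e)) → pbar e x = 0)

/-- `wb` is a family of continuous extensions `w̄_e` of `w_e|_{K_{i(e)}}` to the closure
of `K_{i(e)}`. -/
def IsUCExtensionW (M : MarkovSystem K N E) (wb : E → K → K) : Prop :=
  ∀ e : E, ContinuousOn (wb e) (closure (M.Kset (M.i e))) ∧
    (∀ x ∈ M.Kset (M.i e), wb e x = M.w e x)

/-- The Markov system is uniformly continuous: each `w_e|_{K_{i(e)}}` and `p_e|_{K_{i(e)}}`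
is uniformly continuous. -/
def IsUniformlyContinuous (M : MarkovSystem K N E) : Prop :=
  ∀ e : E, UniformContinuousOn (M.w e) (M.Kset (M.i e)) ∧
    UniformContinuousOn (M.p e) (M.Kset (M.i e))

/-- `∂p_e = p̄_e · 1_{cl(K_{i(e)}) \ K_{i(e)}}`. -/
def dp (M : MarkovSystem K N E) (pbar : E → K → ℝ) (e : E) : K → ℝ :=
  Set.indicator (closure (M.Kset (M.i e)) \ M.Kset (M.i e)) (pbar e)

/-- `Λ ∈ Ẽ(M)` (asymptotic state): shift-invariant probability with `Λ(D) = 1` and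
`E_Λ(1_{_1[e]} | 𝓕) = (p̄_e ∘ F)·1_{T_{i(e)}}` `Λ`-a.e. for every `e`. -/
def IsAsymptotic (M : MarkovSystem K N E) (j0 : N) (xp : N → K) (pbar : E → K → ℝ)
    (Λ : Measure (CodeSpace E)) : Prop :=
  IsProbabilityMeasure Λ ∧ Measure.map (shiftMap E) Λ = Λ ∧
    Λ (M.codeDomain j0 xp) = 1 ∧
    ∀ e : E,
      (Λ[Set.indicator {σ : CodeSpace E | σ 1 = some e} (fun _ => (1 : ℝ)) | pastAlgebra E])
        =ᵐ[Λ] Set.indicator (M.Tset (M.i e)) (fun σ => pbar e (M.code j0 xp σ))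

/-- `Λ ∈ E_⊥(M)`: shift-invariant probability with `Λ(D) = 1` and
`E_Λ(1_{_1[e]} | 𝓕) = (∂p_e ∘ F)·1_{T_{i(e)}}` `Λ`-a.e. for every `e`. -/
def IsPerp (M : MarkovSystem K N E) (j0 : N) (xp : N → K) (pbar : E → K → ℝ)
    (Λ : Measure (CodeSpace E)) : Prop :=
  IsProbabilityMeasure Λ ∧ Measure.map (shiftMap E) Λ = Λ ∧
    Λ (M.codeDomain j0 xp) = 1 ∧
    ∀ e : E,
      (Λ[Set.indicator {σ : CodeSpace E | σ 1 = some e} (fun _ => (1 : ℝ)) | pastAlgebra E])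
        =ᵐ[Λ] Set.indicator (M.Tset (M.i e)) (fun σ => M.dp pbar e (M.code j0 xp σ))

/-- `G = ⋃_{k ≥ 0} ⋃_{j ∈ N} S^{-k}(F^{-1}(K_j) ∩ T_j)`. -/
def Gset (M : MarkovSystem K N E) (j0 : N) (xp : N → K) : Set (CodeSpace E) :=
  ⋃ (k : ℕ) (j : N), (shiftMap E)^[k] ⁻¹' ((M.code j0 xp) ⁻¹' (M.Kset j) ∩ M.Tset j)

/-- `M` is non-degenerate: for every asymptotic state `Λ` there is `i ∈ N` with
`Λ(T_i ∩ F^{-1}(K_i)) > 0`. -/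
def IsNonDegenerate (M : MarkovSystem K N E) (j0 : N) (xp : N → K) (pbar : E → K → ℝ) : Prop :=
  ∀ Λ : Measure (CodeSpace E), M.IsAsymptotic j0 xp pbar Λ →
    ∃ i : N, 0 < Λ (M.Tset i ∩ (M.code j0 xp) ⁻¹' (M.Kset i))

/-- `M` is consistent: `F(Λ) ∈ P(M)` for every asymptotic state `Λ`. -/
def IsConsistent (M : MarkovSystem K N E) (j0 : N) (xp : N → K) (pbar : E → K → ℝ) : Prop :=
  ∀ Λ : Measure (CodeSpace E), M.IsAsymptotic j0 xp pbar Λ →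
    M.IsInvariantMeasure (Measure.map (M.code j0 xp) Λ)

/-- `Rf = ∑_e ∂p_e · (f ∘ w̄_e)`. -/
def Rop (M : MarkovSystem K N E) (pbar : E → K → ℝ) (wb : E → K → K)
    (f : K → ℝ≥0∞) : K → ℝ≥0∞ :=
  fun x => ∑' e : E, ENNReal.ofReal (M.dp pbar e x) * f (wb e x)

/-- `Ω = ⋂_{n ≥ 1} {R^n 1 ≥ 1}`. -/
def OmegaSet (M : MarkovSystem K N E) (pbar : E → K → ℝ) (wb : E → K → K) : Set K :=
  ⋂ n : ℕ, {x : K | 1 ≤ (M.Rop pbar wb)^[n + 1] (fun _ => 1) x}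

/-- `ξ_j = ∑_{e, i(e) = j} sup_{x ∈ K_j} p_e(x)`. -/
def xi (M : MarkovSystem K N E) (j : N) : ℝ≥0∞ :=
  ∑' e : {e : E // M.i e = j}, ⨆ x ∈ M.Kset j, ENNReal.ofReal (M.p e.val x)

/-- `M` has a dominating Markov chain: `ξ_j < ∞` for all `j ∈ N`. -/
def HasDominatingChain (M : MarkovSystem K N E) : Prop := ∀ j : N, M.xi j ≠ ⊤

/-- `ξ_j · q_{j j'} = ∑_{e, i(e) = j, t(e) = j'} sup_{x ∈ K_j} p_e(x)`. -/
def xiq (M : MarkovSystem K N E) (j j' : N) : ℝ≥0∞ :=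
  ∑' e : {e : E // M.i e = j ∧ M.t e = j'}, ⨆ x ∈ M.Kset j, ENNReal.ofReal (M.p e.val x)

/-- `c = ∑_{j'} sup_j ξ_j q_{j j'}`. -/
def cConst (M : MarkovSystem K N E) : ℝ≥0∞ := ∑' j' : N, ⨆ j : N, M.xiq j j'

/-- `α^{x_0}_n({j}) = (1/n) ∑_{k=1}^n ((U*)^k δ_{x_0})(K_j)`. -/
def alphaMeas (M : MarkovSystem K N E) (x0 : K) (n : ℕ) (j : N) : ℝ≥0∞ :=
  (n : ℝ≥0∞)⁻¹ * ∑ k ∈ Finset.range n, (M.adjOp^[k + 1] (Measure.dirac x0)) (M.Kset j)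

/-- Condition (T) at `x_0`: the sequence `(α^{x_0}_n)_n` is uniformly tight. -/
def ConditionT (M : MarkovSystem K N E) (x0 : K) : Prop :=
  ∀ ε : ℝ, 0 < ε → ∃ V : Finset N,
    ∀ n : ℕ, (∑' j : {j : N // j ∉ V}, M.alphaMeas x0 (n + 1) j.val) < ENNReal.ofReal ε

/-- `M` is contractive with contraction rate `a`:
`∑_{e, i(e) = j} p_e(x) d(w_e x, w_e y) ≤ a·d(x, y)` on each `K_j`. -/
def IsContractive (M : MarkovSystem K N E) (a : ℝ) : Prop :=
  ∀ j : N, ∀ x ∈ M.Kset j, ∀ y ∈ M.Kset j,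
    (∑' e : {e : E // M.i e = j},
        ENNReal.ofReal (M.p e.val x * dist (M.w e.val x) (M.w e.val y)))
      ≤ ENNReal.ofReal (a * dist x y)

/-- `L(x) = ∑_j d(x, x_j)·1_{K_j}(x)`. -/
def Lfun (M : MarkovSystem K N E) (xp : N → K) : K → ℝ≥0∞ :=
  fun x => ∑' j : N, Set.indicator (M.Kset j) (fun y => ENNReal.ofReal (dist y (xp j))) x

/-- `b = sup_j sup_{x ∈ K_j} ∑_{e, i(e) = j} p_e(x)·d(w_e(x_{i(e)}), x_{t(e)})`. -/
def bConst (M : MarkovSystem K N E) (xp : N → K) : ℝ≥0∞ :=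
  ⨆ j : N, ⨆ x ∈ M.Kset j,
    ∑' e : {e : E // M.i e = j},
      ENNReal.ofReal (M.p e.val x * dist (M.w e.val (xp (M.i e.val))) (xp (M.t e.val)))

/-- `P^m_x` evaluated on a word: `p_{e_0}(x)·p_{e_1}(w_{e_0}x)·⋯`. -/
def wordProb (M : MarkovSystem K N E) : List (Option E) → K → ℝ
  | [], _ => 1
  | o :: rest, x => M.pext o x * M.wordProb rest (M.wext o x)

/-- `Λ = Φ(μ)`: `Λ` is a shift-invariant Borel probability measure with
`Λ(_m[e_m, …, e_n]) = ∫ P^m_x(_m[e_m, …, e_n]) dμ(x)` for all cylinders with `m ≤ 0`. -/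
def IsPhiOf (M : MarkovSystem K N E) (μ : Measure K) (Λ : Measure (CodeSpace E)) : Prop :=
  IsProbabilityMeasure Λ ∧ Measure.map (shiftMap E) Λ = Λ ∧
    ∀ m : ℤ, m ≤ 0 → ∀ es : List (Option E),
      Λ (cylSetL m es) = ∫⁻ x, ENNReal.ofReal (M.wordProb es x) ∂μ

/-- The (negative of the) energy function: `-u(σ) = -log p_{σ_1}(F(σ))` on `D`
(`+∞` if `p_{σ_1}(F(σ)) = 0`) and `+∞` off `D`, valued in `[0, ∞]`. -/
def negEnergy (M : MarkovSystem K N E) (j0 : N) (xp : N → K) (σ : CodeSpace E) : ℝ≥0∞ :=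
  if σ ∈ M.codeDomain j0 xp then
    (σ 1).elim ⊤ fun e =>
      if M.p e (M.code j0 xp σ) = 0 then ⊤
      else ENNReal.ofReal (-Real.log (M.p e (M.code j0 xp σ)))
  else ⊤

/-- The free energy `h_S(Λ) + ∫ u dΛ`, as an extended real number. -/
def freeEnergy (M : MarkovSystem K N E) (j0 : N) (xp : N → K)
    (Λ : Measure (CodeSpace E)) : EReal :=
  (entropyS Λ : EReal) - ((∫⁻ σ, M.negEnergy j0 xp σ ∂Λ : ℝ≥0∞) : EReal)

/-- `Λ₀ ∈ E(u)`: `Λ₀` is a thermodynamic equilibrium state for the energy function `u`. -/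
def IsEquilibriumForU (M : MarkovSystem K N E) (j0 : N) (xp : N → K)
    (Λ0 : Measure (CodeSpace E)) : Prop :=
  IsProbabilityMeasure Λ0 ∧ Measure.map (shiftMap E) Λ0 = Λ0 ∧ entropyS Λ0 ≠ ⊤ ∧
    M.freeEnergy j0 xp Λ0 =
      sSup {r : EReal | ∃ Λ : Measure (CodeSpace E),
        IsProbabilityMeasure Λ ∧ Measure.map (shiftMap E) Λ = Λ ∧ entropyS Λ ≠ ⊤ ∧
          r = M.freeEnergy j0 xp Λ}

end MarkovSystem

end

/-!
Both parts rest on two facts about `g = E_Λ(1_A | 𝓕)`: almost surely on `A` we have `g > 0`,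
and if `A ∩ C` is null for some `C ∈ 𝓕` then `g = 0` almost surely on `C`.

For an equilibrium state, `_1[e] ∩ {t(σ_0) ≠ i(e)}` misses `Σ_G ⊇ D`, so `p_e ∘ F` vanishes
almost surely on the past event `{t(σ_0) ≠ i(e)}`. If `F σ ∈ K_j`, some `p_e(F σ)` with
`i(e) = j` is nonzero, hence almost surely `t(σ_0) = j`, i.e. `σ ∈ F⁻¹(K_j) ∩ T_j ⊆ G`.

For `Λ ∈ E_⊥(M)` and `σ ∈ F⁻¹(K_j) ∩ T_j ∩ _1[e]` we get `i(e) = j`, so `F σ ∈ K_{i(e)}`, where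
`∂p_e` vanishes; this contradicts positivity of `g` on `_1[e]`. Shift invariance carries the
null sets `F⁻¹(K_j) ∩ T_j` to their preimages, which make up `G`.
-/

section CondExpIndicator

variable {Ω : Type*} {m mΩ : MeasurableSpace Ω} {μ : Measure Ω} [IsFiniteMeasure μ] {A C : Set Ω}

lemma setIntegral_condExp_indicator_one (hm : m ≤ mΩ) (hA : MeasurableSet A)
    (hC : MeasurableSet[m] C) :
    ∫ x in C, (μ[A.indicator (fun _ => (1 : ℝ)) | m]) x ∂μ = μ.real (A ∩ C) := by
  rw [setIntegral_condExp hm ((integrable_const 1).indicator hA) hC, setIntegral_indicator hA,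
    setIntegral_const, smul_eq_mul, mul_one, Set.inter_comm]

lemma ae_condExp_indicator_eq_zero_of_measure_inter_eq_zero (hm : m ≤ mΩ)
    (hA : MeasurableSet A) (hC : MeasurableSet[m] C) (hAC : μ (A ∩ C) = 0) :
    ∀ᵐ x ∂μ, x ∈ C → (μ[A.indicator (fun _ => (1 : ℝ)) | m]) x = 0 := by
  have hnonneg : 0 ≤ᵐ[μ.restrict C] μ[A.indicator (fun _ => (1 : ℝ)) | m] :=
    ae_restrict_of_ae (condExp_nonneg (.of_forall fun _ => Set.indicator_nonneg (by simp) _))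
  have hzero : ∫ x in C, (μ[A.indicator (fun _ => (1 : ℝ)) | m]) x ∂μ = 0 := by
    rw [setIntegral_condExp_indicator_one hm hA hC, measureReal_def, hAC, ENNReal.toReal_zero]
  rw [← ae_restrict_iff' (hm _ hC)]
  exact (integral_eq_zero_iff_of_nonneg_ae hnonneg integrable_condExp.restrict).mp hzero

lemma ae_condExp_indicator_pos_of_mem (hm : m ≤ mΩ) (hA : MeasurableSet A) :
    ∀ᵐ x ∂μ, x ∈ A → 0 < (μ[A.indicator (fun _ => (1 : ℝ)) | m]) x := by
  set g := μ[A.indicator (fun _ => (1 : ℝ)) | m]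
  have hC : MeasurableSet[m] {x | g x ≤ 0} :=
    measurableSet_le stronglyMeasurable_condExp.measurable measurable_const
  have hreal : μ.real (A ∩ {x | g x ≤ 0}) ≤ 0 := by
    rw [← setIntegral_condExp_indicator_one hm hA hC]
    exact setIntegral_nonpos (hm _ hC) fun _ hx => hx
  have hnull : μ (A ∩ {x | g x ≤ 0}) = 0 :=
    (measureReal_eq_zero_iff).mp (le_antisymm hreal measureReal_nonneg)
  filter_upwards [measure_eq_zero_iff_ae_notMem.mp hnull] with x hx hxA
  exact not_le.mp fun hle => hx ⟨hxA, hle⟩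

end CondExpIndicator

section CodeSpace

variable {E : Type*}

lemma measurable_shiftMap : Measurable (shiftMap E) :=
  measurable_pi_lambda _ fun k => measurable_pi_apply (k + 1)

lemma measurableSet_coord_preimage (n : ℤ) (s : Set (Option E)) :
    MeasurableSet {σ : CodeSpace E | σ n ∈ s} :=
  measurable_pi_apply n MeasurableSpace.measurableSet_top

lemma measurableSet_cylSetL (m : ℤ) (es : List (Option E)) : MeasurableSet (cylSetL m es) := by
  have h : cylSetL m es =
      ⋂ k : Fin es.length, {σ : CodeSpace E | σ (m + k) ∈ ({es.get k} : Set (Option E))} := by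
    ext σ
    simp only [cylSetL, Set.mem_iInter, Set.mem_singleton_iff]
    exact ⟨fun h k => h k k.2, fun h k hk => h ⟨k, hk⟩⟩
  rw [h]
  exact .iInter fun k => measurableSet_coord_preimage _ _

lemma pastAlgebra_le : pastAlgebra E ≤ (inferInstance : MeasurableSpace (CodeSpace E)) :=
  MeasurableSpace.generateFrom_le fun _ ⟨_, _, hA⟩ => hA ▸ measurableSet_cylSetL _ _

variable [Countable E]

lemma measurable_apply_zero_pastAlgebra :
    Measurable[pastAlgebra E] fun σ : CodeSpace E => σ 0 := by
  refine @measurable_to_countable' _ _ _ _ (pastAlgebra E) _ fun o =>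
    MeasurableSpace.measurableSet_generateFrom ⟨[o], by simp, ?_⟩
  ext σ
  simp [cylSetL]

end CodeSpace

namespace MarkovSystem

variable {K : Type*} [MetricSpace K] [MeasurableSpace K] {N E : Type*}
  (M : MarkovSystem K N E)

lemma t_eq_i_of_mem_pathSpace {σ : CodeSpace E} (hσ : σ ∈ M.pathSpace) {e₀ e : E}
    (h₀ : σ 0 = some e₀) (h₁ : σ 1 = some e) : M.t e₀ = M.i e := by
  obtain ⟨a, b, ha, hb, hab⟩ := hσ 0
  rw [h₀, Option.some_inj] at ha
  rw [zero_add, h₁, Option.some_inj] at hb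
  rw [ha, hb, hab]

lemma exists_mem_Kset (x : K) : ∃ j, x ∈ M.Kset j :=
  Set.mem_iUnion.mp (M.Kset_cover ▸ Set.mem_univ x)

lemma exists_p_ne_zero {j : N} {x : K} (hx : x ∈ M.Kset j) : ∃ e, M.i e = j ∧ M.p e x ≠ 0 := by
  by_contra! h
  have hsum := M.p_tsum_one j x hx
  rw [tsum_congr fun e : {e // M.i e = j} => h e.1 e.2, tsum_zero] at hsum
  exact zero_ne_one hsum

lemma dp_eq_zero_of_mem (pbar : E → K → ℝ) {e : E} {x : K} (hx : x ∈ M.Kset (M.i e)) :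
    M.dp pbar e x = 0 :=
  Set.indicator_of_notMem (fun h => h.2 hx) _

lemma preimage_code_inter_Tset_subset_Gset (j0 : N) (xp : N → K) (j : N) :
    M.code j0 xp ⁻¹' M.Kset j ∩ M.Tset j ⊆ M.Gset j0 xp :=
  fun _ hσ => Set.mem_iUnion₂.mpr ⟨0, j, hσ⟩

variable {M} {j0 : N} {xp : N → K} {pbar : E → K → ℝ} {Λ : Measure (CodeSpace E)} [Countable E]

lemma IsEquilibrium.ae_p_code_eq_zero_of_t_ne (hΛ : M.IsEquilibrium j0 xp Λ) (e : E) :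
    ∀ᵐ σ ∂Λ, ∀ e₀, σ 0 = some e₀ → M.t e₀ ≠ M.i e → M.p e (M.code j0 xp σ) = 0 := by
  obtain ⟨hprob, -, hD, hce⟩ := hΛ
  set A := {σ : CodeSpace E | σ 1 = some e}
  set C := {σ : CodeSpace E | σ 0 ∈ {o | ∃ e₀, o = some e₀ ∧ M.t e₀ ≠ M.i e}}
  have hC : MeasurableSet[pastAlgebra E] C := measurable_apply_zero_pastAlgebra trivial
  have hAC : Λ (A ∩ C) = 0 := by
    refine (prob_compl_eq_one_iff ((measurableSet_coord_preimage 1 {some e}).inter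
      (pastAlgebra_le _ hC))).mp (le_antisymm prob_le_one (hD ▸ measure_mono ?_))
    rintro σ hσ ⟨h₁, e₀, h₀, hne⟩
    exact hne (M.t_eq_i_of_mem_pathSpace hσ.1 h₀ h₁)
  filter_upwards [ae_condExp_indicator_eq_zero_of_measure_inter_eq_zero pastAlgebra_le
    (measurableSet_coord_preimage 1 {some e}) hC hAC, hce e] with σ hzero hσ e₀ h₀ hne
  exact hσ ▸ hzero ⟨e₀, h₀, hne⟩

lemma IsEquilibrium.measure_Gset_eq_one (hΛ : M.IsEquilibrium j0 xp Λ) :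
    Λ (M.Gset j0 xp) = 1 := by
  have := hΛ.1
  refine le_antisymm prob_le_one (hΛ.2.2.1 ▸ measure_mono_ae ?_)
  filter_upwards [ae_all_iff.mpr hΛ.ae_p_code_eq_zero_of_t_ne] with σ hp hσ
  obtain ⟨e₀, -, h₀, -, -⟩ := hσ.1 0
  obtain ⟨j, hj⟩ := M.exists_mem_Kset (M.code j0 xp σ)
  obtain ⟨e, rfl, hpe⟩ := M.exists_p_ne_zero hj
  have ht : M.t e₀ = M.i e := by_contra fun hne => hpe (hp e e₀ h₀ hne)
  exact M.preimage_code_inter_Tset_subset_Gset j0 xp _ ⟨hj, hσ.1, e₀, h₀, ht⟩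

lemma IsPerp.measure_preimage_code_inter_Tset_eq_zero (hΛ : M.IsPerp j0 xp pbar Λ) (j : N) :
    Λ (M.code j0 xp ⁻¹' M.Kset j ∩ M.Tset j) = 0 := by
  obtain ⟨hprob, -, -, hce⟩ := hΛ
  have hpos : ∀ e : E, ∀ᵐ σ ∂Λ, σ 1 = some e →
      0 < (Λ[Set.indicator {σ | σ 1 = some e} (fun _ => (1 : ℝ)) | pastAlgebra E]) σ :=
    fun e => ae_condExp_indicator_pos_of_mem pastAlgebra_le
      (measurableSet_coord_preimage 1 {some e})
  rw [measure_eq_zero_iff_ae_notMem]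
  filter_upwards [ae_all_iff.mpr hpos, ae_all_iff.mpr hce] with σ hpos hce ⟨hF, hT⟩
  obtain ⟨-, e, -, h₁, -⟩ := hT.1 0
  rw [zero_add] at h₁
  obtain ⟨e₀, h₀, rfl⟩ := hT.2
  have hj : M.t e₀ = M.i e := M.t_eq_i_of_mem_pathSpace hT.1 h₀ h₁
  have hg := hpos e h₁
  rw [hce e, Set.indicator_of_mem (hj ▸ hT), M.dp_eq_zero_of_mem pbar (hj ▸ hF)] at hg
  exact lt_irrefl 0 hg

lemma IsPerp.measure_Gset_eq_zero [Countable N] (hΛ : M.IsPerp j0 xp pbar Λ) :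
    Λ (M.Gset j0 xp) = 0 := by
  have hS : MeasurePreserving (shiftMap E) Λ Λ := ⟨measurable_shiftMap, hΛ.2.1⟩
  exact measure_iUnion_null fun k => measure_iUnion_null fun j =>
    (hS.iterate k).quasiMeasurePreserving.preimage_null
      (hΛ.measure_preimage_code_inter_Tset_eq_zero j)

end MarkovSystem

variable {K : Type*} [MetricSpace K] [CompleteSpace K] [MeasurableSpace K] [BorelSpace K]
  {N E : Type*} [Countable N] [Countable E]

theorem Gset_full_for_equilibrium_null_for_perp_general
    (M : MarkovSystem K N E) (j0 : N) (xp : N → K)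
    (pbar : E → K → ℝ) :
    (∀ Λ : Measure (CodeSpace E), M.IsEquilibrium j0 xp Λ → Λ (M.Gset j0 xp) = 1) ∧
    ((∀ e : E, UniformContinuousOn (M.p e) (M.Kset (M.i e))) → M.IsUCExtensionP pbar →
      ∀ Λ : Measure (CodeSpace E), M.IsPerp j0 xp pbar Λ → Λ (M.Gset j0 xp) = 0) :=
  ⟨fun _ hΛ => hΛ.measure_Gset_eq_one, fun _ _ _ hΛ => hΛ.measure_Gset_eq_zero⟩

/-- (i) Every equilibrium state has `Λ(G) = 1`.
(ii) If each `p_e|_{K_{i(e)}}` is uniformly continuous (with `pbar` the family of continuous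
extensions), then `Λ(G) = 0` for every `Λ ∈ E_⊥(M)`. -/
theorem Gset_full_for_equilibrium_null_for_perp
    (M : MarkovSystem K N E) (j0 : N) (xp : N → K) (hxp : ∀ j, xp j ∈ M.Kset j)
    (pbar : E → K → ℝ) :
    (∀ Λ : Measure (CodeSpace E), M.IsEquilibrium j0 xp Λ → Λ (M.Gset j0 xp) = 1) ∧
    ((∀ e : E, UniformContinuousOn (M.p e) (M.Kset (M.i e))) → M.IsUCExtensionP pbar →
      ∀ Λ : Measure (CodeSpace E), M.IsPerp j0 xp pbar Λ → Λ (M.Gset j0 xp) = 0) :=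
  Gset_full_for_equilibrium_null_for_perp_general M j0 xp pbar
end

section
/- Suppose M has a dominating Markov chain and p_e|_{K_{i(e)}} is uniformly continuous for every e ∈ E. Then for every j ∈ N, Σ_{e∈E, i(e)=j} p̄_e(x) = 1_{cl(K_j)}(x) for all x ∈ K, i.e. the continuous extensions of the probability functions with source j sum to the indicator of the closure of K_j. -/
open MeasureTheory Filter Topology
open scoped ENNReal NNReal Classical

/-! On `K_j` the functions `p_e` with `i(e) = j` are dominated by the summable constants
`sup_{K_j} p_e` (this is `ξ_j < ∞`), so by dominated convergence the identity
`∑_e p_e = 1` on `K_j` passes to the limit at every point of `cl(K_j)`, where the limits of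
the `p_e` are the `p̄_e`. Off `cl(K_j)` all the `p̄_e` vanish. -/

namespace MarkovSystem

variable {K : Type*} [MetricSpace K] [MeasurableSpace K] {N E : Type*}
  {M : MarkovSystem K N E} {j : N}

lemma summable_toReal_iSup_p (hξ : M.xi j ≠ ⊤) :
    Summable fun e : {e : E // M.i e = j} =>
      (⨆ y ∈ M.Kset j, ENNReal.ofReal (M.p e.val y)).toReal :=
  ENNReal.summable_toReal hξ

lemma norm_p_le_toReal_iSup (hξ : M.xi j ≠ ⊤) (e : {e : E // M.i e = j}) {x : K}
    (hx : x ∈ M.Kset j) :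
    ‖M.p e.val x‖ ≤ (⨆ y ∈ M.Kset j, ENNReal.ofReal (M.p e.val y)).toReal := by
  have hfin : (⨆ y ∈ M.Kset j, ENNReal.ofReal (M.p e.val y)) ≠ ⊤ :=
    ne_top_of_le_ne_top hξ (ENNReal.le_tsum e)
  rw [Real.norm_of_nonneg (M.p_nonneg _ _), ← ENNReal.ofReal_le_iff_le_toReal hfin]
  exact le_biSup (fun y => ENNReal.ofReal (M.p e.val y)) hx

lemma tendsto_p_nhdsWithin_pbar {pbar : E → K → ℝ} (hpbar : M.IsUCExtensionP pbar) {e : E}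
    (he : M.i e = j) {x : K} (hx : x ∈ closure (M.Kset j)) :
    Tendsto (M.p e) (𝓝[M.Kset j] x) (𝓝 (pbar e x)) := by
  subst he
  have hcont : ContinuousWithinAt (pbar e) (M.Kset (M.i e)) x :=
    ((hpbar e).1 x hx).mono subset_closure
  exact hcont.tendsto.congr' (eventually_mem_nhdsWithin.mono (hpbar e).2.1)

lemma tsum_pbar_eq_one_of_mem_closure (hξ : M.xi j ≠ ⊤) {pbar : E → K → ℝ}
    (hpbar : M.IsUCExtensionP pbar) {x : K} (hx : x ∈ closure (M.Kset j)) :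
    ∑' e : {e : E // M.i e = j}, pbar e.val x = 1 := by
  have : (𝓝[M.Kset j] x).NeBot := mem_closure_iff_nhdsWithin_neBot.mp hx
  have hlim : Tendsto (fun y => ∑' e : {e : E // M.i e = j}, M.p e.val y) (𝓝[M.Kset j] x)
      (𝓝 (∑' e : {e : E // M.i e = j}, pbar e.val x)) :=
    tendsto_tsum_of_dominated_convergence (summable_toReal_iSup_p hξ)
      (fun e => tendsto_p_nhdsWithin_pbar hpbar e.prop hx)
      (eventually_mem_nhdsWithin.mono fun _ hy e => norm_p_le_toReal_iSup hξ e hy)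
  have hone : (fun y => ∑' e : {e : E // M.i e = j}, M.p e.val y) =ᶠ[𝓝[M.Kset j] x]
      fun _ => 1 :=
    eventually_mem_nhdsWithin.mono (M.p_tsum_one j)
  exact tendsto_nhds_unique (hlim.congr' hone) tendsto_const_nhds

lemma tsum_pbar_eq_zero_of_notMem_closure {pbar : E → K → ℝ} (hpbar : M.IsUCExtensionP pbar)
    {x : K} (hx : x ∉ closure (M.Kset j)) :
    ∑' e : {e : E // M.i e = j}, pbar e.val x = 0 := by
  have hzero (e : {e : E // M.i e = j}) : pbar e.val x = 0 :=
    (hpbar e.val).2.2 x (by rwa [e.prop])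
  simp only [hzero, tsum_zero]

end MarkovSystem

variable {K : Type*} [MetricSpace K] [CompleteSpace K] [MeasurableSpace K] [BorelSpace K]
  {N E : Type*} [Countable N] [Countable E]

theorem tsum_pbar_eq_indicator_closure_general
    (M : MarkovSystem K N E)
    (hdom : M.HasDominatingChain)
    (pbar : E → K → ℝ) (hpbar : M.IsUCExtensionP pbar) (j : N) (x : K) :
    (∑' e : {e : E // M.i e = j}, pbar e.val x) =
      if x ∈ closure (M.Kset j) then 1 else 0 := by
  split_ifs with hx
  · exact MarkovSystem.tsum_pbar_eq_one_of_mem_closure (hdom j) hpbar hx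
  · exact MarkovSystem.tsum_pbar_eq_zero_of_notMem_closure hpbar hx

/-- If `M` has a dominating Markov chain and each `p_e|_{K_{i(e)}}` is
uniformly continuous, then for every `j ∈ N` and `x ∈ K`,
`∑_{e, i(e) = j} p̄_e(x) = 1_{cl(K_j)}(x)`. -/
theorem tsum_pbar_eq_indicator_closure
    (M : MarkovSystem K N E) (j0 : N) (xp : N → K) (hxp : ∀ j, xp j ∈ M.Kset j)
    (hdom : M.HasDominatingChain)
    (hp : ∀ e : E, UniformContinuousOn (M.p e) (M.Kset (M.i e)))
    (pbar : E → K → ℝ) (hpbar : M.IsUCExtensionP pbar) (j : N) (x : K) :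
    (∑' e : {e : E // M.i e = j}, pbar e.val x) =
      if x ∈ closure (M.Kset j) then 1 else 0 :=
  tsum_pbar_eq_indicator_closure_general M hdom pbar hpbar j x
end
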